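/- For every positive integer n, the type 2 degenerate sine-Euler polynomials satisfy $E_{n,\lambda}^{(s)}(x,y)=\sum_{k=1}^{n}\sum_{m=0}^{\lfloor (k-1)/2\rfloor}\binom{n}{k}E_{n-k,\lambda}(x)(-1)^m\lambda^{k-2m-1}y^{2m+1}S_1(k,2m+1)$. -/

import Mathlib

/-!
Expanding the degenerate falling factorial in powers of its argument,
`(a)_{k,λ} = ∑ⱼ s(k,j) aʲ λ^(k-j)` with `s` the signed Stirling numbers of the first kind, the
`k`-th coefficient of `sin_λ^{(y)}(t) = (e_λ^{iy}(t) - e_λ^{-iy}(t))/(2i)` keeps only the odd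
`j = 2m+1`, with `i^(2m+1) = (-1)^m i`. The numbers `S₁(k,j)` defined through `log(1+t)^j/j!`
are these `s(k,j)`, because `(1+t) (log(1+t))' = 1` gives them the Stirling recurrence.
Finally, the series `e_λ^{1/2}(t) + e_λ^{-1/2}(t)` has constant term `2`, so it cancels from the
two defining identities, leaving `∑ E^{(s)}_{n,λ} tⁿ/n! = sin_λ^{(y)}(t) ∑ E_{n,λ} tⁿ/n!`, whose
coefficients are binomial convolutions.
-/

open PowerSeries Finset Complex

/-- The degenerate falling factorial `(x)_{n,λ} = x(x-λ)⋯(x-(n-1)λ)`. -/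
noncomputable def dff (l x : ℂ) (n : ℕ) : ℂ := ∏ j ∈ Finset.range n, (x - j * l)

/-- Exponential generating function of a sequence: `Σ f n * t^n / n!`. -/
noncomputable def egf (f : ℕ → ℂ) : PowerSeries ℂ := PowerSeries.mk fun n => f n / n.factorial

/-- The degenerate exponential `e_λ^x(t) = (1+λt)^{x/λ} = Σ (x)_{n,λ} t^n/n!` as a power series. -/
noncomputable def degExp (l x : ℂ) : PowerSeries ℂ := egf (dff l x)

/-- The degenerate cosine `cos_λ^{(y)}(t) = cos((y/λ) log(1+λt)) = (e_λ^{iy}(t)+e_λ^{-iy}(t))/2`. -/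
noncomputable def degCos (l y : ℂ) : PowerSeries ℂ :=
  PowerSeries.C (R := ℂ) (1/2) * (degExp l (Complex.I * y) + degExp l (-(Complex.I * y)))

/-- The degenerate sine `sin_λ^{(y)}(t) = sin((y/λ) log(1+λt)) = (e_λ^{iy}(t)-e_λ^{-iy}(t))/(2i)`. -/
noncomputable def degSin (l y : ℂ) : PowerSeries ℂ :=
  PowerSeries.C (R := ℂ) (1/(2*Complex.I)) * (degExp l (Complex.I * y) - degExp l (-(Complex.I * y)))

/-- The exponential series `e^{at} = Σ a^n t^n/n!`. -/
noncomputable def expS (a : ℂ) : PowerSeries ℂ := egf (fun n => a ^ n)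

/-- The series of `log(1+t)`. -/
noncomputable def logS : PowerSeries ℂ := PowerSeries.mk fun n => if n = 0 then 0 else (-1)^(n+1) / n

lemma constantCoeff_logS : constantCoeff logS = 0 := by
  simp [logS]

lemma one_add_X_mul_derivative_logS : (1 + X) * d⁄dX ℂ logS = 1 := by
  ext n
  rw [add_mul, one_mul, map_add]
  cases n with
  | zero => simp [coeff_derivative, logS]
  | succ n =>
    rw [coeff_succ_X_mul, coeff_derivative, coeff_derivative]
    simp only [logS, coeff_mk, if_neg (Nat.succ_ne_zero _), coeff_one]
    push_cast
    have h1 : (n : ℂ) + 1 ≠ 0 := Nat.cast_add_one_ne_zero n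
    have h2 : (n : ℂ) + 1 + 1 ≠ 0 := by exact_mod_cast (n + 1).succ_ne_zero
    field_simp
    ring

lemma one_add_X_mul_derivative_logS_pow (j : ℕ) :
    (1 + X) * d⁄dX ℂ (logS ^ (j + 1)) = C ((j : ℂ) + 1) * logS ^ j := by
  rw [Derivation.leibniz_pow, smul_eq_mul, nsmul_eq_mul, Nat.add_sub_cancel]
  simp only [map_add, map_natCast, map_one, Nat.cast_add, Nat.cast_one]
  linear_combination ((j + 1 : ℂ⟦X⟧) * logS ^ j) * one_add_X_mul_derivative_logS

lemma coeff_logS_pow_succ_recurrence (n j : ℕ) :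
    ((n : ℂ) + 1) * coeff (n + 1) (logS ^ (j + 1)) + n * coeff n (logS ^ (j + 1)) =
      ((j : ℂ) + 1) * coeff n (logS ^ j) := by
  have h := congrArg (coeff n) (one_add_X_mul_derivative_logS_pow j)
  rw [add_mul, one_mul, map_add, coeff_C_mul, coeff_derivative] at h
  cases n with
  | zero => simpa [coeff_derivative, mul_comm] using h
  | succ n =>
    rw [coeff_succ_X_mul, coeff_derivative] at h
    push_cast at h ⊢
    linear_combination h

-- The sign `(-1)^(n+k)` equals `(-1)^(n-k)` without the truncated subtraction.
def signedStirlingFirst (n k : ℕ) : ℤ := (-1) ^ (n + k) * Nat.stirlingFirst n k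

lemma signedStirlingFirst_zero_left (k : ℕ) :
    signedStirlingFirst 0 k = if k = 0 then 1 else 0 := by
  cases k <;> simp [signedStirlingFirst]

lemma signedStirlingFirst_succ_zero (n : ℕ) : signedStirlingFirst (n + 1) 0 = 0 := by
  simp [signedStirlingFirst]

lemma signedStirlingFirst_succ_succ (n k : ℕ) :
    signedStirlingFirst (n + 1) (k + 1) =
      signedStirlingFirst n k - n * signedStirlingFirst n (k + 1) := by
  simp only [signedStirlingFirst, Nat.stirlingFirst_succ_succ]
  push_cast
  ring

lemma signedStirlingFirst_eq_zero_of_lt {n k : ℕ} (h : n < k) : signedStirlingFirst n k = 0 := by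
  simp [signedStirlingFirst, Nat.stirlingFirst_eq_zero_of_lt h]

lemma natCast_mul_signedStirlingFirst_zero (n : ℕ) : (n : ℤ) * signedStirlingFirst n 0 = 0 := by
  cases n <;> simp [signedStirlingFirst_succ_zero]

lemma factorial_mul_coeff_logS_pow (n j : ℕ) :
    (n.factorial : ℂ) * coeff n (logS ^ j) = j.factorial * signedStirlingFirst n j := by
  induction n generalizing j with
  | zero =>
    rw [coeff_zero_eq_constantCoeff, map_pow, constantCoeff_logS, signedStirlingFirst_zero_left]
    cases j <;> simp
  | succ n ih =>
    cases j with
    | zero => simp [signedStirlingFirst_succ_zero, coeff_one]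
    | succ j =>
      have h := coeff_logS_pow_succ_recurrence n j
      have ih' := ih (j + 1)
      rw [Nat.factorial_succ] at ih'
      rw [signedStirlingFirst_succ_succ, Nat.factorial_succ, Nat.factorial_succ]
      push_cast at ih' ⊢
      linear_combination (n.factorial : ℂ) * h + (j + 1 : ℂ) * ih j - (n : ℂ) * ih'

lemma egf_injective : Function.Injective egf := by
  intro f g h
  funext n
  have hn := congrArg (coeff n) h
  simp only [egf, coeff_mk] at hn
  exact (div_left_inj' (Nat.cast_ne_zero.2 n.factorial_ne_zero)).1 hn

lemma egf_mul (f g : ℕ → ℂ) :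
    egf f * egf g = egf fun n => ∑ k ∈ range (n + 1), (n.choose k : ℂ) * f k * g (n - k) := by
  ext n
  rw [coeff_mul, Finset.Nat.sum_antidiagonal_eq_sum_range_succ_mk]
  simp only [egf, coeff_mk, Finset.sum_div]
  refine Finset.sum_congr rfl fun k hk => ?_
  have hfac : (n.factorial : ℂ) = n.choose k * k.factorial * (n - k).factorial := by
    exact_mod_cast (Nat.choose_mul_factorial_mul_factorial (Finset.mem_range_succ_iff.1 hk)).symm
  have hchoose : (n.choose k : ℂ) ≠ 0 :=
    Nat.cast_ne_zero.2 (Nat.choose_pos (Finset.mem_range_succ_iff.1 hk)).ne'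
  rw [hfac]
  field_simp

lemma logS_pow_eq_C_mul_egf (j : ℕ) :
    logS ^ j = C (j.factorial : ℂ) * egf fun n => signedStirlingFirst n j := by
  ext n
  have hn : (n.factorial : ℂ) ≠ 0 := Nat.cast_ne_zero.2 n.factorial_ne_zero
  rw [coeff_C_mul, egf, coeff_mk, mul_div_assoc', ← factorial_mul_coeff_logS_pow]
  field_simp

lemma dff_succ (l a : ℂ) (n : ℕ) : dff l a (n + 1) = dff l a n * (a - n * l) :=
  Finset.prod_range_succ _ _

lemma dff_eq_sum_signedStirlingFirst (l a : ℂ) (n : ℕ) :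
    dff l a n = ∑ j ∈ range (n + 1), (signedStirlingFirst n j : ℂ) * a ^ j * l ^ (n - j) := by
  induction n with
  | zero => simp [dff, signedStirlingFirst_zero_left]
  | succ n ih =>
    set P := ∑ j ∈ range (n + 1), (signedStirlingFirst n j : ℂ) * a ^ j * l ^ (n - j)
    set Q := ∑ j ∈ range (n + 1), (signedStirlingFirst n (j + 1) : ℂ) * a ^ (j + 1) * l ^ (n - j)
    have hQ : Q + (signedStirlingFirst n 0 : ℂ) * l ^ (n + 1) = l * P := by
      let T j := (signedStirlingFirst n j : ℂ) * a ^ j * l ^ (n + 1 - j)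
      calc Q + (signedStirlingFirst n 0 : ℂ) * l ^ (n + 1)
          = ∑ j ∈ range (n + 2), T j := by simp [T, Q, Finset.sum_range_succ' T (n + 1)]
        _ = ∑ j ∈ range (n + 1), T j := by
          simp [Finset.sum_range_succ T (n + 1), T, signedStirlingFirst_eq_zero_of_lt n.lt_succ_self]
        _ = l * P := by
          rw [Finset.mul_sum]
          refine Finset.sum_congr rfl fun j hj => ?_
          simp only [T]
          rw [Nat.sub_add_comm (Finset.mem_range_succ_iff.1 hj), pow_succ]
          ring
    have hn0 : (n : ℂ) * signedStirlingFirst n 0 = 0 := by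
      exact_mod_cast natCast_mul_signedStirlingFirst_zero n
    have hsum : ∑ j ∈ range (n + 1),
        (signedStirlingFirst (n + 1) (j + 1) : ℂ) * a ^ (j + 1) * l ^ (n + 1 - (j + 1)) =
          a * P - n * Q := by
      rw [Finset.mul_sum, Finset.mul_sum, ← Finset.sum_sub_distrib]
      refine Finset.sum_congr rfl fun j _ => ?_
      rw [signedStirlingFirst_succ_succ, Nat.add_sub_add_right]
      push_cast
      ring
    rw [dff_succ, ih, Finset.sum_range_succ', hsum, signedStirlingFirst_succ_zero]
    linear_combination (n : ℂ) * hQ - l ^ (n + 1) * hn0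

lemma sum_filter_odd_range_succ {M : Type*} [AddCommMonoid M] (f : ℕ → M) {k : ℕ} (hk : 0 < k) :
    ∑ j ∈ (range (k + 1)).filter Odd, f j = ∑ m ∈ range ((k - 1) / 2 + 1), f (2 * m + 1) := by
  have himage : (range (k + 1)).filter Odd = (range ((k - 1) / 2 + 1)).image (2 * · + 1) := by
    ext j
    simp only [Finset.mem_filter, Finset.mem_range, Finset.mem_image]
    constructor
    · rintro ⟨hj, m, rfl⟩
      exact ⟨m, by omega, rfl⟩
    · rintro ⟨m, hm, rfl⟩
      exact ⟨by omega, odd_two_mul_add_one m⟩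
  rw [himage, Finset.sum_image fun a _ b _ hab => by omega]

lemma sub_neg_pow {R : Type*} [CommRing R] (z : R) (j : ℕ) :
    z ^ j - (-z) ^ j = if Odd j then 2 * z ^ j else 0 := by
  split_ifs with h
  · rw [h.neg_pow]; ring
  · rw [(Nat.not_odd_iff_even.1 h).neg_pow, sub_self]

lemma dff_sub_dff_neg_div (l y : ℂ) (k : ℕ) :
    (dff l (I * y) k - dff l (-(I * y)) k) / (2 * I) =
      ∑ m ∈ range ((k - 1) / 2 + 1),
        (-1) ^ m * l ^ (k - 2 * m - 1) * y ^ (2 * m + 1) * signedStirlingFirst k (2 * m + 1) := by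
  rcases Nat.eq_zero_or_pos k with rfl | hk
  · simp [dff, signedStirlingFirst_eq_zero_of_lt]
  rw [dff_eq_sum_signedStirlingFirst, dff_eq_sum_signedStirlingFirst, ← Finset.sum_sub_distrib,
    Finset.sum_div]
  have hodd : ∀ j ∈ range (k + 1),
      ((signedStirlingFirst k j : ℂ) * (I * y) ^ j * l ^ (k - j) -
        (signedStirlingFirst k j : ℂ) * (-(I * y)) ^ j * l ^ (k - j)) / (2 * I) =
      if Odd j then (signedStirlingFirst k j : ℂ) * (I * y) ^ j * l ^ (k - j) / I else 0 := by
    intro j _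
    rw [← sub_mul, ← mul_sub, sub_neg_pow]
    split_ifs
    · field_simp
    · simp
  rw [Finset.sum_congr rfl hodd, ← Finset.sum_filter, sum_filter_odd_range_succ _ hk]
  refine Finset.sum_congr rfl fun m _ => ?_
  rw [mul_pow, pow_succ I, pow_mul, I_sq, Nat.sub_sub]
  field_simp

lemma degSin_eq_egf (l y : ℂ) :
    degSin l y = egf fun k => ∑ m ∈ range ((k - 1) / 2 + 1),
      (-1) ^ m * l ^ (k - 2 * m - 1) * y ^ (2 * m + 1) * signedStirlingFirst k (2 * m + 1) := by
  simp only [← dff_sub_dff_neg_div]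
  ext k
  simp only [degSin, degExp, egf, coeff_C_mul, map_sub, coeff_mk]
  ring

lemma eq_signedStirlingFirst_of_logS_pow_eq {S : ℕ → ℕ → ℂ}
    (hS : ∀ j, logS ^ j = C (j.factorial : ℂ) * egf fun k => S k j) (k j : ℕ) :
    S k j = signedStirlingFirst k j := by
  have h := hS j
  rw [logS_pow_eq_C_mul_egf] at h
  have hC : C (j.factorial : ℂ) ≠ 0 := (map_ne_zero C).2 (Nat.cast_ne_zero.2 j.factorial_ne_zero)
  exact (congrFun (egf_injective (mul_left_cancel₀ hC h)) k).symm

lemma constantCoeff_degExp (l a : ℂ) : constantCoeff (degExp l a) = 1 := by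
  simp [degExp, egf, dff]

lemma degExp_add_degExp_neg_ne_zero (l a : ℂ) : degExp l a + degExp l (-a) ≠ 0 := fun h => by
  simpa [constantCoeff_degExp] using congrArg constantCoeff h

theorem stmt14_general (lam x y : ℝ) (E Es : ℕ → ℂ) (S1 : ℕ → ℕ → ℂ)
    (hE : egf E * (degExp lam (1/2) + degExp lam (-(1/2))) = 2 * degExp lam x)
    (hEs : egf Es * (degExp lam (1/2) + degExp lam (-(1/2))) =
      2 * degExp lam x * degSin lam y)
    (hS1 : ∀ j, logS ^ j = PowerSeries.C (R := ℂ) (Nat.factorial j) * egf (fun k => S1 k j))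
    (n : ℕ) :
    Es n = ∑ k ∈ Finset.Icc 1 n, ∑ m ∈ Finset.range ((k-1)/2+1),
      (n.choose k : ℂ) * E (n-k) * (-1)^m * (lam:ℂ)^(k-2*m-1) * (y:ℂ)^(2*m+1) *
        S1 k (2*m+1) := by
  have hEs_eq : egf Es = degSin lam y * egf E :=
    mul_right_cancel₀ (degExp_add_degExp_neg_ne_zero lam (1 / 2))
      (by linear_combination hEs - degSin lam y * hE)
  rw [degSin_eq_egf, egf_mul] at hEs_eq
  rw [congrFun (egf_injective hEs_eq) n, Finset.range_eq_Ico,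
    Finset.sum_eq_sum_Ico_succ_bot (by positivity), Finset.Ico_add_one_right_eq_Icc]
  have hzero : ∑ m ∈ range ((0 - 1) / 2 + 1), (-1) ^ m * (lam : ℂ) ^ (0 - 2 * m - 1) *
      (y : ℂ) ^ (2 * m + 1) * (signedStirlingFirst 0 (2 * m + 1) : ℂ) = 0 := by
    simp [signedStirlingFirst_eq_zero_of_lt]
  rw [hzero, mul_zero, zero_mul, zero_add]
  refine Finset.sum_congr rfl fun k _ => ?_
  rw [Finset.mul_sum, Finset.sum_mul]
  refine Finset.sum_congr rfl fun m _ => ?_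
  rw [eq_signedStirlingFirst_of_logS_pow_eq hS1]
  ring

theorem stmt14 (lam x y : ℝ) (E Es : ℕ → ℂ) (S1 : ℕ → ℕ → ℂ)
    (hE : egf E * (degExp lam (1/2) + degExp lam (-(1/2))) = 2 * degExp lam x)
    (hEs : egf Es * (degExp lam (1/2) + degExp lam (-(1/2))) =
      2 * degExp lam x * degSin lam y)
    (hS1 : ∀ j, logS ^ j = PowerSeries.C (R := ℂ) (Nat.factorial j) * egf (fun k => S1 k j))
    (n : ℕ) (hn : 0 < n) :
    Es n = ∑ k ∈ Finset.Icc 1 n, ∑ m ∈ Finset.range ((k-1)/2+1),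
      (n.choose k : ℂ) * E (n-k) * (-1)^m * (lam:ℂ)^(k-2*m-1) * (y:ℂ)^(2*m+1) *
        S1 k (2*m+1) :=
  stmt14_general lam x y E Es S1 hE hEs hS1 n
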